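/- Let f : {0,1}^n → {-1,1} be symmetric and suppose f(x) = 1 for all x with |x| ∈ [r₀, n - r₁], where |x| = Σ xᵢ. Then Σ_{S ≠ ∅} f^(S)^2 ≤ 4·(Σ_{s < r₀} C(n,s) + Σ_{s < r₁} C(n,s))·2^{-n}. -/

import Mathlib

open Finset

def wt {n : ℕ} (x : Fin n → ZMod 2) : ℕ := ∑ i, (x i).val

noncomputable def fhat {n : ℕ} (f : (Fin n → ZMod 2) → ℝ) (S : Finset (Fin n)) : ℝ :=
  (∑ x : Fin n → ZMod 2, f x * (-1 : ℝ) ^ (∑ i ∈ S, (x i).val)) / 2 ^ n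

lemma wt_le {n : ℕ} (x : Fin n → ZMod 2) : wt x ≤ n := by
  have : ∀ a : ZMod 2, a.val ≤ 1 := by decide
  calc wt x ≤ ∑ _i : Fin n, 1 := Finset.sum_le_sum fun i _ => this (x i)
    _ = n := by simp

lemma sum_chi {n : ℕ} (x y : Fin n → ZMod 2) :
    ∑ S : Finset (Fin n), ((-1:ℝ) ^ (∑ i ∈ S, (x i).val)) * ((-1:ℝ) ^ (∑ i ∈ S, (y i).val))
      = if x = y then (2:ℝ) ^ n else 0 := by
  have h1 : ∀ S : Finset (Fin n),
      ((-1:ℝ) ^ (∑ i ∈ S, (x i).val)) * ((-1:ℝ) ^ (∑ i ∈ S, (y i).val))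
        = ∏ i ∈ S, (-1:ℝ) ^ ((x i).val + (y i).val) := by
    intro S
    rw [← pow_add, ← Finset.sum_add_distrib, Finset.prod_pow_eq_pow_sum]
  simp_rw [h1]
  have h2 : ∑ S : Finset (Fin n), ∏ i ∈ S, (-1:ℝ) ^ ((x i).val + (y i).val)
      = ∏ i, ((-1:ℝ) ^ ((x i).val + (y i).val) + 1) := by
    rw [Finset.prod_add]
    rw [Finset.powerset_univ]
    simp
  rw [h2]
  by_cases hxy : x = y
  · subst hxy
    rw [if_pos rfl]
    have h3 : ∀ i : Fin n, (-1:ℝ) ^ ((x i).val + (x i).val) + 1 = 2 := by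
      intro i; rw [← two_mul, pow_mul]; norm_num
    simp_rw [h3]
    simp
  · rw [if_neg hxy]
    obtain ⟨i, hi⟩ := Function.ne_iff.mp hxy
    apply Finset.prod_eq_zero (Finset.mem_univ i)
    have : (x i).val + (y i).val = 1 := by revert hi; generalize x i = a; generalize y i = b; revert a b; decide
    rw [this]; norm_num

lemma parseval {n : ℕ} (f : (Fin n → ZMod 2) → ℝ) (hbool : ∀ x, f x = 1 ∨ f x = -1) :
    ∑ S : Finset (Fin n), fhat f S ^ 2 = 1 := by
  have hsq : ∀ x, f x * f x = 1 := fun x => by rcases hbool x with h | h <;> rw [h] <;> norm_num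
  have step : ∀ S : Finset (Fin n), fhat f S ^ 2 =
      (∑ x : Fin n → ZMod 2, ∑ y : Fin n → ZMod 2,
        (f x * f y) * (((-1:ℝ) ^ (∑ i ∈ S, (x i).val)) * ((-1:ℝ) ^ (∑ i ∈ S, (y i).val))))
        / ((2:ℝ)^n * 2^n) := by
    intro S
    rw [fhat, div_pow, sq, Finset.sum_mul_sum]
    congr 1
    · apply Finset.sum_congr rfl; intro x _; apply Finset.sum_congr rfl; intro y _; ring
    · ring
  simp_rw [step, ← Finset.sum_div]
  rw [Finset.sum_comm]
  have inner : ∀ x : Fin n → ZMod 2,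
      ∑ S : Finset (Fin n), ∑ y : Fin n → ZMod 2,
        (f x * f y) * (((-1:ℝ) ^ (∑ i ∈ S, (x i).val)) * ((-1:ℝ) ^ (∑ i ∈ S, (y i).val)))
      = (2:ℝ)^n := by
    intro x
    rw [Finset.sum_comm]
    have : ∀ y : Fin n → ZMod 2,
        ∑ S : Finset (Fin n),
          (f x * f y) * (((-1:ℝ) ^ (∑ i ∈ S, (x i).val)) * ((-1:ℝ) ^ (∑ i ∈ S, (y i).val)))
        = (f x * f y) * (if x = y then (2:ℝ)^n else 0) := by
      intro y; rw [← Finset.mul_sum, sum_chi]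
    simp_rw [this]
    simp_rw [mul_ite, mul_zero]
    rw [Finset.sum_ite_eq]
    simp [hsq x]
  simp_rw [inner]
  rw [Finset.sum_const]
  have hcard : Fintype.card (Fin n → ZMod 2) = 2 ^ n := by simp
  rw [Finset.card_univ, hcard]
  have h2 : ((2:ℝ)^n) ≠ 0 := by positivity
  field_simp
  rw [nsmul_eq_mul]; push_cast; ring
lemma wt_eq_card {n : ℕ} (x : Fin n → ZMod 2) :
    wt x = (Finset.univ.filter fun j => x j = 1).card := by
  have h : ∀ a : ZMod 2, a.val = if a = 1 then 1 else 0 := by decide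
  rw [Finset.card_filter]
  exact Finset.sum_congr rfl fun j _ => h (x j)

lemma card_wt_eq {n : ℕ} (s : ℕ) :
    (Finset.univ.filter fun x : Fin n → ZMod 2 => wt x = s).card = n.choose s := by
  have key : (Finset.univ.filter fun x : Fin n → ZMod 2 => wt x = s).card
      = (Finset.powersetCard s (Finset.univ : Finset (Fin n))).card := by
    apply Finset.card_bij (fun x _ => Finset.univ.filter fun j => x j = 1)
    · intro x hx
      rw [Finset.mem_powersetCard]
      refine ⟨Finset.filter_subset _ _, ?_⟩
      rw [← wt_eq_card]
      exact (Finset.mem_filter.mp hx).2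
    · intro a ha b hb hab
      funext j
      have h1 : (a j = 1) ↔ (b j = 1) := by
        constructor <;> intro h
        · have : j ∈ Finset.univ.filter fun j => a j = 1 :=
            Finset.mem_filter.mpr ⟨Finset.mem_univ j, h⟩
          rw [hab] at this
          exact (Finset.mem_filter.mp this).2
        · have : j ∈ Finset.univ.filter fun j => b j = 1 :=
            Finset.mem_filter.mpr ⟨Finset.mem_univ j, h⟩
          rw [← hab] at this
          exact (Finset.mem_filter.mp this).2
      revert h1; generalize a j = u; generalize b j = v; revert u v; decide
    · intro A hA
      rw [Finset.mem_powersetCard] at hA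
      refine ⟨fun j => if j ∈ A then 1 else 0, ?_, ?_⟩
      · rw [Finset.mem_filter]
        refine ⟨Finset.mem_univ _, ?_⟩
        rw [wt_eq_card]
        have : (Finset.univ.filter fun j => (if j ∈ A then (1:ZMod 2) else 0) = 1) = A := by
          ext j
          simp only [Finset.mem_filter, Finset.mem_univ, true_and]
          split <;> simp_all
        rw [this, hA.2]
      · ext j
        simp only [Finset.mem_filter, Finset.mem_univ, true_and]
        split <;> simp_all
  rw [key, Finset.card_powersetCard]
  simp

lemma card_low {n r : ℕ} :
    ((Finset.univ.filter fun x : Fin n → ZMod 2 => wt x < r).card : ℝ)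
      ≤ ∑ s ∈ Finset.range r, (n.choose s : ℝ) := by
  have h : (Finset.univ.filter fun x : Fin n → ZMod 2 => wt x < r).card
      ≤ ∑ s ∈ Finset.range r, n.choose s := by
    rw [Finset.card_eq_sum_card_fiberwise (f := wt) (t := Finset.range r)
      (fun x hx => Finset.mem_range.mpr (Finset.mem_filter.mp hx).2)]
    apply Finset.sum_le_sum
    intro s _
    rw [← card_wt_eq (n := n) s]
    apply Finset.card_le_card
    intro x hx
    rw [Finset.mem_filter] at hx ⊢
    exact ⟨Finset.mem_univ _, hx.2⟩
  calc ((Finset.univ.filter fun x : Fin n → ZMod 2 => wt x < r).card : ℝ)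
      ≤ ((∑ s ∈ Finset.range r, n.choose s : ℕ) : ℝ) := by exact_mod_cast h
    _ = ∑ s ∈ Finset.range r, (n.choose s : ℝ) := by push_cast; ring

lemma card_high {n r : ℕ} :
    ((Finset.univ.filter fun x : Fin n → ZMod 2 => n < wt x + r).card : ℝ)
      ≤ ∑ s ∈ Finset.range r, (n.choose s : ℝ) := by
  have h : (Finset.univ.filter fun x : Fin n → ZMod 2 => n < wt x + r).card
      ≤ ∑ s ∈ Finset.range r, n.choose s := by
    rw [Finset.card_eq_sum_card_fiberwise (f := fun x => n - wt x) (t := Finset.range r)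
      (fun x hx => Finset.mem_range.mpr ((Nat.sub_lt_iff_lt_add (wt_le x)).mpr
        (by have := (Finset.mem_filter.mp hx).2; omega)))]
    apply Finset.sum_le_sum
    intro t ht
    rw [Finset.mem_range] at ht
    by_cases htn : t ≤ n
    · calc (Finset.filter (fun x => n - wt x = t)
            (Finset.univ.filter fun x : Fin n → ZMod 2 => n < wt x + r)).card
          ≤ (Finset.univ.filter fun x : Fin n → ZMod 2 => wt x = n - t).card := by
            apply Finset.card_le_card
            intro x hx
            rw [Finset.mem_filter] at hx ⊢
            have h1 := hx.2
            have h2 := wt_le x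
            exact ⟨Finset.mem_univ _, by omega⟩
        _ = n.choose (n - t) := card_wt_eq _
        _ = n.choose t := Nat.choose_symm htn
    · have : (Finset.filter (fun x => n - wt x = t)
          (Finset.univ.filter fun x : Fin n → ZMod 2 => n < wt x + r)) = ∅ := by
        apply Finset.filter_eq_empty_iff.mpr
        intro x _
        have := wt_le x
        omega
      rw [this]
      simp
  calc ((Finset.univ.filter fun x : Fin n → ZMod 2 => n < wt x + r).card : ℝ)
      ≤ ((∑ s ∈ Finset.range r, n.choose s : ℕ) : ℝ) := by exact_mod_cast h
    _ = ∑ s ∈ Finset.range r, (n.choose s : ℝ) := by push_cast; ring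
theorem tail_fourier_mass {n r₀ r₁ : ℕ} (f : (Fin n → ZMod 2) → ℝ)
    (hbool : ∀ x, f x = 1 ∨ f x = -1)
    (hsym : ∀ x y, wt x = wt y → f x = f y)
    (hband : ∀ x, r₀ ≤ wt x → wt x + r₁ ≤ n → f x = 1) :
    (∑ S ∈ Finset.univ.filter (fun S : Finset (Fin n) => S ≠ ∅), fhat f S ^ 2) ≤
      4 * ((∑ s ∈ Finset.range r₀, (n.choose s : ℝ)) +
           (∑ s ∈ Finset.range r₁, (n.choose s : ℝ))) / 2 ^ n := by
  classical
  set N : ℝ := (2:ℝ) ^ n with hN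
  have hN0 : (0:ℝ) < N := by positivity
  set M : ℝ := (∑ s ∈ Finset.range r₀, (n.choose s : ℝ)) +
      (∑ s ∈ Finset.range r₁, (n.choose s : ℝ)) with hM
  set E : ℝ := ∑ x : Fin n → ZMod 2, f x with hE
  -- fhat at ∅
  have hfhat0 : fhat f ∅ = E / N := by
    rw [fhat]; simp [hE, hN]
  -- split the Parseval sum
  have hsplit : (∑ S ∈ Finset.univ.filter (fun S : Finset (Fin n) => S ≠ ∅), fhat f S ^ 2)
      = 1 - (E / N) ^ 2 := by
    have := Finset.sum_filter_add_sum_filter_not (Finset.univ : Finset (Finset (Fin n)))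
      (fun S => S = ∅) (fun S => fhat f S ^ 2)
    have h1 : Finset.univ.filter (fun S : Finset (Fin n) => S = ∅) = {∅} := by
      ext S; simp
    rw [h1, Finset.sum_singleton, parseval f hbool, hfhat0] at this
    have h2 : Finset.univ.filter (fun S : Finset (Fin n) => ¬ S = ∅)
        = Finset.univ.filter (fun S : Finset (Fin n) => S ≠ ∅) := rfl
    rw [h2] at this
    linarith
  rw [hsplit]
  -- bad set
  set B := Finset.univ.filter (fun x : Fin n → ZMod 2 => f x = -1) with hB
  have hBsub : B ⊆ (Finset.univ.filter fun x : Fin n → ZMod 2 => wt x < r₀)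
      ∪ (Finset.univ.filter fun x : Fin n → ZMod 2 => n < wt x + r₁) := by
    intro x hx
    rw [hB, Finset.mem_filter] at hx
    rw [Finset.mem_union, Finset.mem_filter, Finset.mem_filter]
    by_contra hc
    push_neg at hc
    have h1 : r₀ ≤ wt x := by
      have := hc.1 (Finset.mem_univ x); omega
    have h2 : wt x + r₁ ≤ n := by
      have := hc.2 (Finset.mem_univ x); omega
    have := hband x h1 h2
    rw [hx.2] at this
    norm_num at this
  have hBM : (B.card : ℝ) ≤ M := by
    have h1 : (B.card : ℝ) ≤
        ((Finset.univ.filter fun x : Fin n → ZMod 2 => wt x < r₀).card : ℝ)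
        + ((Finset.univ.filter fun x : Fin n → ZMod 2 => n < wt x + r₁).card : ℝ) := by
      have := Finset.card_le_card hBsub
      have h2 := Finset.card_union_le
        (Finset.univ.filter fun x : Fin n → ZMod 2 => wt x < r₀)
        (Finset.univ.filter fun x : Fin n → ZMod 2 => n < wt x + r₁)
      exact_mod_cast le_trans this h2
    calc (B.card : ℝ) ≤ _ := h1
      _ ≤ M := by rw [hM]; exact add_le_add card_low card_high
  -- E bounds
  have hcard : (Finset.univ : Finset (Fin n → ZMod 2)).card = 2 ^ n := by
    rw [Finset.card_univ]; simp
  have hEub : E ≤ N := by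
    rw [hE, hN]
    calc ∑ x : Fin n → ZMod 2, f x ≤ ∑ _x : Fin n → ZMod 2, (1:ℝ) :=
        Finset.sum_le_sum fun x _ => by rcases hbool x with h | h <;> rw [h] <;> norm_num
      _ = (2:ℝ) ^ n := by rw [Finset.sum_const, hcard]; push_cast; ring
  have hElb0 : -N ≤ E := by
    have h : ∑ _x : Fin n → ZMod 2, (-1:ℝ) ≤ ∑ x : Fin n → ZMod 2, f x :=
      Finset.sum_le_sum fun x _ => by rcases hbool x with h | h <;> rw [h] <;> norm_num
    rw [Finset.sum_const, hcard] at h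
    simp only [nsmul_eq_mul] at h
    push_cast at h
    rw [hE, hN]
    linarith
  have hElb : N - 2 * (B.card : ℝ) ≤ E := by
    have hsum := Finset.sum_filter_add_sum_filter_not (Finset.univ : Finset (Fin n → ZMod 2))
      (fun x => f x = -1) f
    have hB1 : ∑ x ∈ B, f x = -(B.card : ℝ) := by
      rw [hB]
      rw [Finset.sum_congr rfl (fun x hx => (Finset.mem_filter.mp hx).2)]
      rw [Finset.sum_const]
      push_cast; ring
    have hB2 : ∑ x ∈ Finset.univ.filter (fun x : Fin n → ZMod 2 => ¬ f x = -1), f x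
        = ((Finset.univ.filter (fun x : Fin n → ZMod 2 => ¬ f x = -1)).card : ℝ) := by
      rw [Finset.sum_congr rfl (fun x hx => by
        rcases hbool x with h | h
        · exact h
        · exact absurd h (Finset.mem_filter.mp hx).2)]
      rw [Finset.sum_const]; push_cast; ring
    have hcards := Finset.card_filter_add_card_filter_not
      (s := (Finset.univ : Finset (Fin n → ZMod 2))) (fun x : Fin n → ZMod 2 => f x = -1)
    rw [hcard] at hcards
    have : E = -(B.card : ℝ) + ((2^n : ℕ) - B.card : ℕ) := by
      rw [hE, ← hsum, hB1, hB2]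
      congr 1
      have h3 : (Finset.univ.filter (fun x : Fin n → ZMod 2 => ¬ f x = -1)).card
          = 2 ^ n - B.card := by rw [hB]; omega
      exact_mod_cast h3
    rw [this, hN]
    have hle : B.card ≤ 2 ^ n := by
      have : B.card ≤ (Finset.univ : Finset (Fin n → ZMod 2)).card := Finset.card_le_univ B
      rw [hcard] at this; exact this
    push_cast [hle]
    ring_nf
    norm_num
  -- final algebra
  have hM0 : 0 ≤ M := by
    rw [hM]; positivity
  have key : N ^ 2 - E ^ 2 ≤ 4 * M * N := by
    have h1 : N - E ≤ 2 * M := by nlinarith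
    have h2 : N + E ≤ 2 * N := by linarith
    nlinarith [mul_le_mul h1 h2 (by linarith) (by linarith)]
  have hfinal : 1 - (E / N) ^ 2 ≤ 4 * M / N := by
    rw [div_pow]
    rw [sub_le_iff_le_add]
    rw [div_add_div _ _ (ne_of_gt hN0) (by positivity : (N:ℝ)^2 ≠ 0)]
    rw [le_div_iff₀ (by positivity)]
    nlinarith
  exact hfinal
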